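/- Let p ∈ ℝ[x] be a monic real polynomial of degree n+1 ≥ 2 such that all complex critical points of p are real (every root z ∈ ℂ of p′ satisfies Im z = 0) and all critical values lie in [−1,1] (|p(x)| ≤ 1 for every x ∈ ℝ with p′(x) = 0). Then all real roots of p lie in some interval of length 4: there exists a ∈ ℝ such that every x ∈ ℝ with p(x) = 0 satisfies a ≤ x ≤ a + 4. -/

import Mathlib

open Polynomial Finset

private lemma T_natDegree_le' : ∀ d : ℕ, (Polynomial.Chebyshev.T ℝ d).natDegree ≤ d := by
  intro d
  induction d using Nat.strong_induction_on with
  | _ d ih =>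
    match d with
    | 0 => simp [Polynomial.Chebyshev.T_zero]
    | 1 => simp [Polynomial.Chebyshev.T_one]
    | (d+2) =>
      have hrec := Polynomial.Chebyshev.T_add_two ℝ d
      rw [show ((d+2:ℕ) : ℤ) = (d:ℤ)+2 by push_cast; ring, hrec]
      refine le_trans (natDegree_sub_le _ _) (max_le ?_ ?_)
      · refine le_trans (natDegree_mul_le) ?_
        have h1 : (2 * X : ℝ[X]).natDegree ≤ 1 := by
          refine le_trans natDegree_mul_le ?_; simp
        have h2 := ih (d+1) (by omega)
        rw [show ((d:ℤ)+1) = ((d+1:ℕ):ℤ) by push_cast; ring]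
        omega
      · exact le_trans (ih d (by omega)) (by omega)

private lemma T_coeff' : ∀ d : ℕ, (Polynomial.Chebyshev.T ℝ (d+1)).coeff (d+1) = 2 ^ d := by
  intro d
  induction d using Nat.strong_induction_on with
  | _ d ih =>
    match d with
    | 0 => norm_num [Polynomial.Chebyshev.T_one]
    | (d+1) =>
      have hrec := Polynomial.Chebyshev.T_add_two ℝ d
      rw [show ((d+1:ℕ) : ℤ) + 1 = (d:ℤ)+2 by push_cast; ring, hrec]
      have h1 : (2 * X * Polynomial.Chebyshev.T ℝ ((d:ℤ)+1)).coeff (d+2)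
          = 2 * (Polynomial.Chebyshev.T ℝ ((d:ℤ)+1)).coeff (d+1) := by
        rw [mul_assoc, coeff_ofNat_mul, coeff_X_mul]
      have h2 : (Polynomial.Chebyshev.T ℝ (d:ℤ)).coeff (d+2) = 0 := by
        refine coeff_eq_zero_of_natDegree_lt (lt_of_le_of_lt (T_natDegree_le' d) (by omega))
      have h3 := ih d (by omega)
      rw [show ((d:ℤ)+1) = ((d:ℕ):ℤ)+1 by norm_num] at h1
      rw [coeff_sub, show (d+1+1 : ℕ) = d+2 from rfl, h1, h2, h3]
      ring

private lemma coeff_interpolate' (s : Finset ℕ) (v : ℕ → ℝ) (f : ℕ → ℝ) :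
    (Lagrange.interpolate s v f).coeff (#s - 1) =
      ∑ i ∈ s, f i * Lagrange.nodalWeight s v i := by
  rw [Lagrange.interpolate_apply, finset_sum_coeff]
  refine sum_congr rfl fun i hi => ?_
  have hb : Lagrange.basis s v i =
      C (Lagrange.nodalWeight s v i) * Lagrange.nodal (s.erase i) v := by
    rw [Lagrange.basis_eq_prod_sub_inv_mul_nodal_div hi,
      ← Lagrange.nodal_erase_eq_nodal_div hi]
  rw [hb, ← mul_assoc, ← C_mul, coeff_C_mul]
  have hmon : (Lagrange.nodal (s.erase i) v).Monic := Lagrange.nodal_monic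
  have hdeg : (Lagrange.nodal (s.erase i) v).natDegree = #s - 1 := by
    rw [Lagrange.natDegree_nodal, card_erase_of_mem hi]
  rw [show (#s - 1) = (Lagrange.nodal (s.erase i) v).natDegree from hdeg.symm,
    hmon.coeff_natDegree, mul_one]

/-- Chebyshev-type extremal bound: a monic polynomial of degree `d ≥ 1` which is
bounded by `1` in absolute value on `[a, b]` forces `b - a ≤ 4`. -/
private lemma cheb_bound' (q : ℝ[X]) (hq : q.Monic) {d : ℕ} (hd1 : 1 ≤ d)
    (hdeg : q.natDegree = d) {a b : ℝ}
    (hbnd : ∀ x : ℝ, a ≤ x → x ≤ b → |q.eval x| ≤ 1) : b - a ≤ 4 := by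
  by_contra hcon
  push_neg at hcon
  set r : ℝ := (b - a) / 2 with hr_def
  set m : ℝ := (a + b) / 2 with hm_def
  have hr : 2 < r := by rw [hr_def]; linarith
  have hd0 : (d : ℝ) ≠ 0 := by positivity
  set v : ℕ → ℝ := fun k => Real.cos (k * Real.pi / d) with hv_def
  set s : Finset ℕ := Finset.range (d + 1) with hs_def
  have hθmem : ∀ k : ℕ, k ≤ d → (k * Real.pi / d) ∈ Set.Icc 0 Real.pi := by
    intro k hk
    constructor
    · positivity
    · rw [div_le_iff₀ (by positivity)]
      have : (k:ℝ) ≤ (d:ℝ) := by exact_mod_cast hk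
      nlinarith [Real.pi_pos]
  have hv_anti : ∀ j k : ℕ, j < k → k ≤ d → v k < v j := by
    intro j k hjk hk
    refine Real.strictAntiOn_cos (hθmem j (by omega)) (hθmem k hk) ?_
    have hj : (j:ℝ) < (k:ℝ) := by exact_mod_cast hjk
    have hd' : (0:ℝ) < d := by positivity
    rw [div_lt_div_iff₀ hd' hd']
    nlinarith [mul_pos (mul_pos (sub_pos.mpr hj) Real.pi_pos) hd']
  have hvs : Set.InjOn v s := by
    intro j hj k hk hjk
    simp only [hs_def, coe_range, Set.mem_Iio] at hj hk
    by_contra hne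
    rcases Nat.lt_or_ge j k with h | h
    · exact (ne_of_lt (hv_anti j k h (by omega))) hjk.symm
    · have hkj : k < j := by omega
      exact (ne_of_lt (hv_anti k j hkj (by omega))) hjk
  have hv_mem : ∀ k : ℕ, -1 ≤ v k ∧ v k ≤ 1 :=
    fun k => ⟨Real.neg_one_le_cos _, Real.cos_le_one _⟩
  have hscard : #s = d + 1 := card_range _
  set w : ℕ → ℝ := fun k => Lagrange.nodalWeight s v k with hw_def
  set g : ℝ[X] := C r * X + C m with hg_def
  set qt : ℝ[X] := q.comp g with hqt_def
  have hrne : r ≠ 0 := by linarith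
  have hgdeg : g.natDegree = 1 := natDegree_linear hrne
  have hqtdeg : qt.natDegree = d := by
    rw [hqt_def, natDegree_comp, hgdeg, hdeg, mul_one]
  have hqtcoeff : qt.coeff d = r ^ d := by
    have : qt.leadingCoeff = q.leadingCoeff * g.leadingCoeff ^ q.natDegree :=
      leadingCoeff_comp (by rw [hgdeg]; omega)
    rw [leadingCoeff, hqtdeg] at this
    rw [this, hq.leadingCoeff, leadingCoeff_linear hrne, hdeg, one_mul]
  have hqtval : ∀ k : ℕ, |qt.eval (v k)| ≤ 1 := by
    intro k
    rw [hqt_def, eval_comp]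
    have hgeval : g.eval (v k) = r * v k + m := by simp [hg_def]
    rw [hgeval]
    obtain ⟨h1, h2⟩ := hv_mem k
    refine hbnd _ ?_ ?_
    · nlinarith
    · nlinarith
  have key1 : r ^ d = ∑ k ∈ s, qt.eval (v k) * w k := by
    have hdlt : qt.degree < (#s : ℕ) := by
      rw [hscard]
      refine lt_of_le_of_lt degree_le_natDegree ?_
      rw [hqtdeg]; exact_mod_cast Nat.lt_succ_self d
    have := Lagrange.eq_interpolate hvs hdlt
    have h2 := congrArg (fun P => P.coeff (#s - 1)) this
    rw [coeff_interpolate'] at h2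
    rw [hscard] at h2
    simpa [hqtcoeff] using h2
  have hTval : ∀ k : ℕ, (Polynomial.Chebyshev.T ℝ d).eval (v k) = (-1) ^ k := by
    intro k
    rw [hv_def]
    rw [Polynomial.Chebyshev.T_real_cos]
    have : ((d:ℤ) : ℝ) * (k * Real.pi / d) = k * Real.pi := by
      push_cast
      field_simp
    rw [this]
    simpa using Real.cos_nat_mul_pi_sub 0 k
  have key2 : (2:ℝ) ^ (d - 1) = ∑ k ∈ s, (-1:ℝ) ^ k * w k := by
    have hdlt : (Polynomial.Chebyshev.T ℝ d).degree < (#s : ℕ) := by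
      rw [hscard]
      refine lt_of_le_of_lt degree_le_natDegree ?_
      exact_mod_cast lt_of_le_of_lt (T_natDegree_le' d) (Nat.lt_succ_self d)
    have := Lagrange.eq_interpolate hvs hdlt
    have h2 := congrArg (fun P => P.coeff (#s - 1)) this
    rw [coeff_interpolate'] at h2
    rw [hscard] at h2
    simp only [Nat.add_sub_cancel] at h2
    have hTc : (Polynomial.Chebyshev.T ℝ d).coeff d = 2 ^ (d - 1) := by
      obtain ⟨e, rfl⟩ : ∃ e, d = e + 1 := ⟨d - 1, by omega⟩
      simpa using T_coeff' e
    rw [hTc] at h2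
    rw [h2]
    exact sum_congr rfl fun k hk => by rw [hTval k]
  have hsign : ∀ k ∈ s, |w k| = (-1:ℝ) ^ k * w k := by
    intro k hk
    rw [mem_range] at hk
    have hk' : k ≤ d := by omega
    have hsplit : s.erase k = Finset.range k ∪ Finset.Ico (k+1) (d+1) := by
      ext j
      simp only [mem_erase, hs_def, mem_range, mem_union, mem_Ico]
      omega
    have hdisj : Disjoint (Finset.range k) (Finset.Ico (k+1) (d+1)) := by
      rw [disjoint_left]
      intro j hj1 hj2
      rw [mem_range] at hj1
      rw [mem_Ico] at hj2
      omega
    have hw : w k = (∏ j ∈ Finset.range k, (v k - v j)⁻¹) *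
        (∏ j ∈ Finset.Ico (k+1) (d+1), (v k - v j)⁻¹) := by
      rw [hw_def]
      simp only [Lagrange.nodalWeight]
      rw [hsplit, prod_union hdisj]
    have hpos2 : 0 < ∏ j ∈ Finset.Ico (k+1) (d+1), (v k - v j)⁻¹ := by
      refine prod_pos fun j hj => ?_
      rw [mem_Ico] at hj
      have := hv_anti k j (by omega) (by omega)
      exact inv_pos.mpr (by linarith)
    have hneg1 : (∏ j ∈ Finset.range k, (v k - v j)⁻¹) =
        (-1:ℝ)^k * ∏ j ∈ Finset.range k, (v j - v k)⁻¹ := by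
      have : ∀ j ∈ Finset.range k, (v k - v j)⁻¹ = (-1) * (v j - v k)⁻¹ := by
        intro j hj
        rw [show v k - v j = -(v j - v k) by ring, inv_neg]
        ring
      rw [prod_congr rfl this, prod_mul_distrib, prod_const, card_range]
    have hpos1 : 0 < ∏ j ∈ Finset.range k, (v j - v k)⁻¹ := by
      refine prod_pos fun j hj => ?_
      rw [mem_range] at hj
      have := hv_anti j k hj hk'
      exact inv_pos.mpr (by linarith)
    have hwval : (-1:ℝ)^k * w k = (∏ j ∈ Finset.range k, (v j - v k)⁻¹) *
        (∏ j ∈ Finset.Ico (k+1) (d+1), (v k - v j)⁻¹) := by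
      rw [hw, hneg1]
      have h11 : (-1:ℝ)^k * (-1:ℝ)^k = 1 := by
        rw [← pow_add]
        exact Even.neg_one_pow ⟨k, rfl⟩
      calc (-1:ℝ)^k * ((-1:ℝ)^k * (∏ j ∈ Finset.range k, (v j - v k)⁻¹) *
            (∏ j ∈ Finset.Ico (k+1) (d+1), (v k - v j)⁻¹))
          = ((-1:ℝ)^k * (-1:ℝ)^k) * ((∏ j ∈ Finset.range k, (v j - v k)⁻¹) *
            (∏ j ∈ Finset.Ico (k+1) (d+1), (v k - v j)⁻¹)) := by ring
        _ = _ := by rw [h11, one_mul]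
    have hwpos : 0 < (-1:ℝ)^k * w k := by
      rw [hwval]; exact mul_pos hpos1 hpos2
    calc |w k| = |(-1:ℝ)^k * w k| := by
          rw [abs_mul, abs_pow, abs_neg, abs_one, one_pow, one_mul]
      _ = (-1:ℝ)^k * w k := abs_of_pos hwpos
  have hchain : r ^ d ≤ (2:ℝ) ^ (d - 1) := by
    rw [key1, key2]
    calc ∑ k ∈ s, qt.eval (v k) * w k ≤ ∑ k ∈ s, |qt.eval (v k) * w k| :=
          le_abs_self _ |>.trans (abs_sum_le_sum_abs _ _)
      _ ≤ ∑ k ∈ s, (-1:ℝ)^k * w k := by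
          refine sum_le_sum fun k hk => ?_
          rw [abs_mul, ← hsign k hk]
          have := hqtval k
          have h0 : (0:ℝ) ≤ |w k| := abs_nonneg _
          nlinarith
  have h2d : (2:ℝ) ^ (d-1) < r ^ d := by
    have h1 : (2:ℝ) ^ (d-1) ≤ 2 ^ d := by
      refine pow_le_pow_right₀ (by norm_num) (by omega)
    have h2 : (2:ℝ) ^ d < r ^ d := by
      refine pow_lt_pow_left₀ hr (by norm_num) (by omega)
    linarith
  linarith

/-- The maximum principle step: a polynomial vanishing at `α` and `β` whose
critical values are bounded by `1` is bounded by `1` on `[α, β]`. -/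
private lemma abs_le_on_Icc' (p : Polynomial ℝ)
    (hcritval : ∀ x : ℝ, (derivative p).eval x = 0 → |p.eval x| ≤ 1)
    (α β : ℝ) (hab : α ≤ β) (hα : p.eval α = 0) (hβ : p.eval β = 0) :
    ∀ x : ℝ, α ≤ x → x ≤ β → |p.eval x| ≤ 1 := by
  intro x hx1 hx2
  have hcomp : IsCompact (Set.Icc α β) := isCompact_Icc
  have hcont : ContinuousOn (fun y => |p.eval y|) (Set.Icc α β) :=
    (p.continuous_aeval.abs).continuousOn
  obtain ⟨c, hc, hmax⟩ := hcomp.exists_isMaxOn (Set.nonempty_Icc.mpr hab) hcont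
  have hxmem : x ∈ Set.Icc α β := ⟨hx1, hx2⟩
  have hle : |p.eval x| ≤ |p.eval c| := hmax hxmem
  by_cases hM : |p.eval c| ≤ 1
  · linarith
  push_neg at hM
  exfalso
  have hcne : p.eval c ≠ 0 := by
    intro h0; rw [h0] at hM; simp at hM; linarith
  have hcα : c ≠ α := fun h => hcne (h ▸ hα)
  have hcβ : c ≠ β := fun h => hcne (h ▸ hβ)
  have hcIoo : c ∈ Set.Ioo α β := by
    rcases hc with ⟨h1, h2⟩
    exact ⟨lt_of_le_of_ne h1 (Ne.symm hcα), lt_of_le_of_ne h2 hcβ⟩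
  have hnhds : Set.Icc α β ∈ nhds c :=
    Filter.mem_of_superset (isOpen_Ioo.mem_nhds hcIoo) Set.Ioo_subset_Icc_self
  have hderiv0 : (derivative p).eval c = 0 := by
    rcases lt_or_gt_of_ne hcne with hneg | hpos
    · have hlmin : IsLocalMin (fun y => p.eval y) c := by
        refine Filter.eventually_iff_exists_mem.mpr ⟨Set.Icc α β, hnhds, fun y hy => ?_⟩
        have h2 : |p.eval y| ≤ |p.eval c| := hmax hy
        have h3 : |p.eval c| = -(p.eval c) := abs_of_neg hneg
        have h4 : -|p.eval y| ≤ p.eval y := neg_abs_le _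
        show p.eval c ≤ p.eval y
        linarith
      have := hlmin.deriv_eq_zero
      rwa [Polynomial.deriv] at this
    · have hlmax : IsLocalMax (fun y => p.eval y) c := by
        refine Filter.eventually_iff_exists_mem.mpr ⟨Set.Icc α β, hnhds, fun y hy => ?_⟩
        have h2 : |p.eval y| ≤ |p.eval c| := hmax hy
        have h3 : |p.eval c| = p.eval c := abs_of_pos hpos
        have h4 : p.eval y ≤ |p.eval y| := le_abs_self _
        show p.eval y ≤ p.eval c
        linarith
      have := hlmax.deriv_eq_zero
      rwa [Polynomial.deriv] at this
  exact absurd (hcritval c hderiv0) (not_le.mpr hM)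

/-- extremal property of Chebyshev polynomials.  If a monic
real polynomial of degree `n+1 ≥ 2` has all its complex critical points real
and all its critical values in `[−1, 1]`, then all its real roots lie in an
interval of length `4`. -/
theorem stmt18 (n : ℕ) (hn : 1 ≤ n) (p : Polynomial ℝ)
    (hmonic : p.Monic) (hdeg : p.natDegree = n + 1)
    (hrealcrit : ∀ z : ℂ, aeval z (derivative p) = 0 → z.im = 0)
    (hcritval : ∀ x : ℝ, (derivative p).eval x = 0 → |p.eval x| ≤ 1) :
    ∃ a : ℝ, ∀ x : ℝ, p.eval x = 0 → a ≤ x ∧ x ≤ a + 4 := by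
  by_cases hex : ∃ x : ℝ, p.eval x = 0
  · have hp0 : p ≠ 0 := hmonic.ne_zero
    set rs : Finset ℝ := p.roots.toFinset with hrs_def
    have hmem : ∀ x : ℝ, p.eval x = 0 → x ∈ rs := by
      intro x hx
      rw [hrs_def, Multiset.mem_toFinset, mem_roots hp0]
      exact hx
    obtain ⟨x₀, hx₀⟩ := hex
    have hne : rs.Nonempty := ⟨x₀, hmem x₀ hx₀⟩
    set α : ℝ := rs.min' hne with hα_def
    set β : ℝ := rs.max' hne with hβ_def
    have hab : α ≤ β := rs.min'_le _ (rs.max'_mem hne)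
    have hmem' : ∀ x : ℝ, x ∈ rs → p.eval x = 0 := by
      intro x hx
      rw [hrs_def, Multiset.mem_toFinset, mem_roots hp0] at hx
      exact hx
    have hαroot : p.eval α = 0 := hmem' _ (rs.min'_mem hne)
    have hβroot : p.eval β = 0 := hmem' _ (rs.max'_mem hne)
    have hbnd := abs_le_on_Icc' p hcritval α β hab hαroot hβroot
    have hlen : β - α ≤ 4 :=
      cheb_bound' p hmonic (d := n + 1) (by omega) hdeg hbnd
    refine ⟨α, fun x hx => ?_⟩
    have hxmem := hmem x hx
    constructor
    · exact rs.min'_le x hxmem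
    · have := rs.le_max' x hxmem
      linarith
  · exact ⟨0, fun x hx => absurd ⟨x, hx⟩ hex⟩
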